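/- Let E be a finite-dimensional real inner product space, Q ⊆ E a nonempty convex set, h : E → ℝ a differentiable convex function, and V(y,x) = h(y) − h(x) − ⟨∇h(x), y − x⟩ the associated Bregman divergence. Let y ∈ E and suppose x⁺ ∈ Q minimizes the function z ↦ V(z, y) over Q. Then for every u ∈ Q one has V(u, x⁺) ≤ V(u, y) (Pythagorean theorem for Bregman projections). -/

import Mathlib

/-!
Expanding the divergences gives the three-point identity
`V(u, y) = V(u, x⁺) + V(x⁺, y) + ⟪∇h(x⁺) − ∇h(y), u − x⁺⟫`.
Convexity of `h` makes `V(x⁺, y) ≥ 0`, and the inner product is the derivative of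
`z ↦ V(z, y)` at its minimizer `x⁺` in the feasible direction `u − x⁺`, hence nonnegative.
-/

open scoped RealInnerProductSpace

/-- The Bregman divergence `V(y,x) = h(y) − h(x) − ⟨∇h(x), y − x⟩`. -/
noncomputable def breg {E : Type*} [NormedAddCommGroup E] [InnerProductSpace ℝ E]
    [CompleteSpace E] (h : E → ℝ) (y x : E) : ℝ :=
  h y - h x - ⟪gradient h x, y - x⟫

theorem ConvexOn.apply_sub_le_of_hasFDerivAt {E : Type*} [NormedAddCommGroup E]
    [NormedSpace ℝ E] {s : Set E} {f : E → ℝ} {f' : E →L[ℝ] ℝ} {a b : E}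
    (hf : ConvexOn ℝ s f) (ha : a ∈ s) (hb : b ∈ s) (hf' : HasFDerivAt f f' a) :
    f' (b - a) ≤ f b - f a := by
  let L : ℝ →ᵃ[ℝ] E := AffineMap.lineMap a b
  have hderiv : HasDerivAt (f ∘ L) (f' (b - a)) 0 := by
    refine HasFDerivAt.comp_hasDerivAt (0 : ℝ) ?_ AffineMap.hasDerivAt_lineMap
    simpa [L] using hf'
  have hslope := (hf.comp_affineMap L).le_slope_of_hasDerivAt
    (x := 0) (y := 1) (by simpa [L]) (by simpa [L]) zero_lt_one hderiv
  simpa [slope, L] using hslope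

theorem ConvexOn.inner_gradient_sub_le {E : Type*} [NormedAddCommGroup E]
    [InnerProductSpace ℝ E] [CompleteSpace E] {s : Set E} {f : E → ℝ} {f' a b : E}
    (hf : ConvexOn ℝ s f) (ha : a ∈ s) (hb : b ∈ s) (hf' : HasGradientAt f f' a) :
    ⟪f', b - a⟫ ≤ f b - f a := by
  simpa using hf.apply_sub_le_of_hasFDerivAt ha hb hf'.hasFDerivAt

theorem IsLocalMinOn.inner_gradient_sub_nonneg {E : Type*} [NormedAddCommGroup E]
    [InnerProductSpace ℝ E] [CompleteSpace E] {s : Set E} {f : E → ℝ} {f' x u : E}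
    (hmin : IsLocalMinOn f s x) (hs : Convex ℝ s) (hx : x ∈ s) (hu : u ∈ s)
    (hf' : HasGradientAt f f' x) :
    0 ≤ ⟪f', u - x⟫ := by
  simpa using hmin.hasFDerivWithinAt_nonneg hf'.hasFDerivAt.hasFDerivWithinAt
    (sub_mem_posTangentConeAt_of_segment_subset (hs.segment_subset hx hu))

section Bregman

variable {E : Type*} [NormedAddCommGroup E] [InnerProductSpace ℝ E] [CompleteSpace E]
  {h : E → ℝ}

theorem breg_nonneg (hconv : ConvexOn ℝ Set.univ h) {x : E} (hx : DifferentiableAt ℝ h x)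
    (y : E) : 0 ≤ breg h y x := by
  have := hconv.inner_gradient_sub_le (Set.mem_univ x) (Set.mem_univ y) hx.hasGradientAt
  unfold breg
  linarith

theorem hasGradientAt_breg_left {x : E} (hx : DifferentiableAt ℝ h x) (y : E) :
    HasGradientAt (fun z => breg h z y) (gradient h x - gradient h y) x := by
  have hlin : HasFDerivAt (fun z => ⟪gradient h y, z - y⟫)
      (InnerProductSpace.toDual ℝ E (gradient h y)) x := by
    simpa only [InnerProductSpace.toDual_apply_apply, inner_sub_right] using
      ((InnerProductSpace.toDual ℝ E (gradient h y)).hasFDerivAt (x := x)).sub_const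
        ⟪gradient h y, y⟫
  rw [hasGradientAt_iff_hasFDerivAt, map_sub]
  exact (hx.hasGradientAt.hasFDerivAt.sub_const (h y)).sub hlin

theorem breg_three_point (u x y : E) :
    breg h u y = breg h u x + breg h x y + ⟪gradient h x - gradient h y, u - x⟫ := by
  have hsplit : u - y = (u - x) + (x - y) := by abel
  simp only [breg, hsplit, inner_add_right, inner_sub_left]
  ring

end Bregman

theorem bregman_pythagorean_general
    {E : Type*} [NormedAddCommGroup E] [InnerProductSpace ℝ E] [FiniteDimensional ℝ E]
    (Q : Set E) (hQconv : Convex ℝ Q)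
    (h : E → ℝ) (hdiff : Differentiable ℝ h) (hconv : ConvexOn ℝ Set.univ h)
    (y : E) (xp : E) (hxpQ : xp ∈ Q)
    (hxp : IsMinOn (fun z => breg h z y) Q xp) :
    ∀ u ∈ Q, breg h u xp ≤ breg h u y := by
  intro u hu
  have hopt : 0 ≤ ⟪gradient h xp - gradient h y, u - xp⟫ :=
    hxp.localize.inner_gradient_sub_nonneg hQconv hxpQ hu
      (hasGradientAt_breg_left (hdiff xp) y)
  have hproj : 0 ≤ breg h xp y := breg_nonneg hconv (hdiff y) xp
  rw [breg_three_point u xp y]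
  linarith

/-- Pythagorean theorem for Bregman projections: if `x⁺ ∈ Q` minimizes `z ↦ V(z, y)`
over the convex set `Q`, then `V(u, x⁺) ≤ V(u, y)` for every `u ∈ Q`. -/
theorem bregman_pythagorean
    {E : Type*} [NormedAddCommGroup E] [InnerProductSpace ℝ E] [FiniteDimensional ℝ E]
    (Q : Set E) (hQne : Q.Nonempty) (hQconv : Convex ℝ Q)
    (h : E → ℝ) (hdiff : Differentiable ℝ h) (hconv : ConvexOn ℝ Set.univ h)
    (y : E) (xp : E) (hxpQ : xp ∈ Q)
    (hxp : IsMinOn (fun z => breg h z y) Q xp) :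
    ∀ u ∈ Q, breg h u xp ≤ breg h u y :=
  bregman_pythagorean_general Q hQconv h hdiff hconv y xp hxpQ hxp
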